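/- If A is a trace-free Hermitian operator on ℂ^r (Σ λ_α = 0, eigenvalues λ_α), then the variance V(Q_A) = ∫_{S^{2r-1}} |⟨Au,u⟩|² dμ(u) equals (Σ_α λ_α²)/(r(r+1)), and consequently V(Q_A) ≤ ‖A‖²/(r+1). -/

import Mathlib

/-!
Write `A = V diag(λ) V*`. The substitution `u ↦ Vᵀ u` preserves `μ` and turns
`∑ A α β u_α ū_β` into `∑ λ_γ |u_γ|²`, so the variance is `∑ λ_γ λ_δ m_γδ` with the fourth moments
`m_γδ = ∫ |u_γ|² |u_δ|² dμ`. Summing `|u_i + w u_j|⁴` over `w ∈ {1, I, -1, -I}` gives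
`4 |u_i|⁴ + 4 |u_j|⁴ + 16 |u_i|² |u_j|²` pointwise, while `(u_i + w u_j) / √2` is the `i`-th
coordinate of a Givens rotation of `u` and so has the law of `u_i`. Hence `m_ii = m_jj = 2 m_ij`
for `i ≠ j`, and `∑ m_γδ = ∫ |u|⁴ dμ = 1` forces `m_γδ = (1 + δ_γδ) / (r (r + 1))`. Finally
`∑ λ_γ λ_δ (1 + δ_γδ) = (∑ λ_γ)² + ∑ λ_γ²` and `∑ λ_γ = tr A = 0`.
-/

open MeasureTheory Matrix ComplexConjugate Complex

theorem Complex.sum_range_four_normSq_add_I_pow_mul_sq (a b : ℂ) :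
    ∑ k ∈ Finset.range 4, normSq (a + I ^ k * b) ^ 2 =
      4 * normSq a ^ 2 + 4 * normSq b ^ 2 + 16 * normSq a * normSq b := by
  simp [Finset.sum_range_succ, pow_succ, normSq_apply]
  ring

variable {n : Type*} {μ : Measure (n → ℂ)}

noncomputable def fourthMoment (μ : Measure (n → ℂ)) (i j : n) : ℝ :=
  ∫ u, normSq (u i) * normSq (u j) ∂μ

theorem fourthMoment_comm (μ : Measure (n → ℂ)) (i j : n) :
    fourthMoment μ i j = fourthMoment μ j i := by
  simp only [fourthMoment, mul_comm]

section Fintype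

variable [Fintype n]

theorem isCompact_setOf_sum_normSq_eq_one : IsCompact {u : n → ℂ | ∑ α, normSq (u α) = 1} := by
  refine Metric.isCompact_of_isClosed_isBounded
    (isClosed_eq (continuous_finsetSum _ fun α _ => continuous_normSq.comp (continuous_apply α))
      continuous_const) ((Metric.isBounded_closedBall (x := 0) (r := 1)).subset fun u hu => ?_)
  rw [mem_closedBall_zero_iff, pi_norm_le_iff_of_nonneg zero_le_one]
  intro α
  rw [← sq_le_one_iff₀ (norm_nonneg _), ← normSq_eq_norm_sq, ← hu]
  exact Finset.single_le_sum (fun β _ => normSq_nonneg (u β)) (Finset.mem_univ α)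

theorem Continuous.integrable_of_ae_sum_normSq_eq_one [IsFiniteMeasure μ]
    (hμ : ∀ᵐ u ∂μ, ∑ α, normSq (u α) = 1) {f : (n → ℂ) → ℝ} (hf : Continuous f) :
    Integrable f μ := by
  rw [← Measure.restrict_eq_self_of_ae_mem hμ]
  exact hf.continuousOn.integrableOn_compact isCompact_setOf_sum_normSq_eq_one

theorem sum_fourthMoment [IsProbabilityMeasure μ] (hμ : ∀ᵐ u ∂μ, ∑ α, normSq (u α) = 1) :
    ∑ i, ∑ j, fourthMoment μ i j = 1 := by
  have hint : ∀ i j : n, Integrable (fun u => normSq (u i) * normSq (u j)) μ := fun i j =>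
    Continuous.integrable_of_ae_sum_normSq_eq_one hμ (by fun_prop)
  calc ∑ i, ∑ j, fourthMoment μ i j
      = ∫ u, ∑ i, ∑ j, normSq (u i) * normSq (u j) ∂μ := by
        rw [integral_finsetSum _ fun i _ => integrable_finsetSum _ fun j _ => hint i j]
        exact Finset.sum_congr rfl fun i _ => (integral_finsetSum _ fun j _ => hint i j).symm
    _ = ∫ _, 1 ∂μ := integral_congr_ae <| hμ.mono fun u hu => by
        simp only [← Finset.sum_mul_sum, hu, one_mul]
    _ = 1 := by simp

theorem sum_sq_div_le_iSup_abs_sq_div (l : n → ℝ) :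
    (∑ i, l i ^ 2) / (Fintype.card n * (Fintype.card n + 1)) ≤
      (⨆ i, |l i|) ^ 2 / (Fintype.card n + 1) := by
  have hl : ∀ i, l i ^ 2 ≤ (⨆ i, |l i|) ^ 2 := fun i => by
    rw [← sq_abs]
    exact pow_le_pow_left₀ (abs_nonneg (l i))
      (le_ciSup (f := fun i => |l i|) (Set.finite_range _).bddAbove i) 2
  rw [← div_div]
  gcongr
  refine div_le_of_le_mul₀ (Nat.cast_nonneg _) (sq_nonneg _) ?_
  simpa [mul_comm] using Finset.sum_le_card_nsmul Finset.univ _ _ fun i _ => hl i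

variable [DecidableEq n]

theorem Finset.sum_mul_mul_ite_two_one (l : n → ℝ) :
    ∑ i, ∑ j, l i * l j * (if i = j then 2 else 1) = (∑ i, l i) ^ 2 + ∑ i, l i ^ 2 := by
  have h : ∀ i j : n, (if i = j then (2 : ℝ) else 1) = 1 + if i = j then 1 else 0 := by
    intro i j; split_ifs <;> norm_num
  simp [h, mul_add, Finset.sum_add_distrib, sq, Finset.sum_mul_sum]

/-- The rotation `[[c, s], [-s̄, c̄]]` in the coordinates `i, j`, the identity elsewhere. -/
noncomputable def Matrix.givens (i j : n) (c s : ℂ) : Matrix n n ℂ :=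
  1 + (c - 1) • single i i 1 + (conj c - 1) • single j j 1 + s • single i j 1
    - conj s • single j i 1

theorem Matrix.givens_mem_unitaryGroup {i j : n} (hij : i ≠ j) {c s : ℂ}
    (hcs : normSq c + normSq s = 1) : givens i j c s ∈ unitaryGroup n ℂ := by
  have h : c * conj c + s * conj s = 1 := by simp only [mul_conj]; exact_mod_cast hcs
  rw [mem_unitaryGroup_iff', star_eq_conjTranspose]
  simp only [givens, conjTranspose_add, conjTranspose_sub, conjTranspose_smul, conjTranspose_one,
    conjTranspose_single, star_one, RCLike.star_def, conj_conj, map_sub, map_one,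
    add_mul, mul_add, sub_mul, mul_sub, one_mul, mul_one, Matrix.smul_mul, Matrix.mul_smul,
    single_mul_single_same, single_mul_single_of_ne, hij, hij.symm, ne_eq, not_false_eq_true,
    smul_zero, smul_smul]
  linear_combination (norm := module) h • single i i (1 : ℂ) + h • single j j (1 : ℂ)

theorem Matrix.givens_mulVec_apply_left {i j : n} (hij : i ≠ j) (c s : ℂ) (u : n → ℂ) :
    (givens i j c s *ᵥ u) i = c * u i + s * u j := by
  simp [givens, add_mulVec, sub_mulVec, single_mulVec, hij]
  ring

theorem Matrix.IsHermitian.sum_mul_mul_conj_eq {A : Matrix n n ℂ} (hA : A.IsHermitian)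
    (u : n → ℂ) :
    ∑ α, ∑ β, A α β * u α * conj (u β) =
      ↑(∑ γ, hA.eigenvalues γ * normSq (((hA.eigenvectorUnitary : Matrix n n ℂ)ᵀ *ᵥ u) γ)) := by
  set V : Matrix n n ℂ := ↑hA.eigenvectorUnitary
  have hQ : ∑ α, ∑ β, A α β * u α * conj (u β) = u ⬝ᵥ (A *ᵥ star u) := by
    simp only [dotProduct, mulVec, Finset.mul_sum, Pi.star_apply, RCLike.star_def]
    exact Finset.sum_congr rfl fun _ _ => Finset.sum_congr rfl fun _ _ => by ring
  have hV : star V *ᵥ star u = star (Vᵀ *ᵥ u) := by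
    ext; simp [mulVec, dotProduct, mul_comm]
  conv_lhs => rw [hQ, hA.spectral_theorem, Unitary.conjStarAlgAut_apply, ← mulVec_mulVec,
    ← mulVec_mulVec, dotProduct_mulVec, dotProduct_mulVec, ← mulVec_transpose V, hV]
  push_cast
  simp only [dotProduct, vecMul_diagonal, Pi.star_apply, RCLike.star_def, Function.comp_apply]
  exact Finset.sum_congr rfl fun γ _ => by rw [← mul_conj, mul_comm ((Vᵀ *ᵥ u) γ), mul_assoc]; rfl

def IsUnitarilyInvariant (μ : Measure (n → ℂ)) : Prop :=
  ∀ U : unitaryGroup n ℂ, μ.map (fun u => (U : Matrix n n ℂ) *ᵥ u) = μ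

namespace IsUnitarilyInvariant

theorem integral_comp_mulVec (hinv : IsUnitarilyInvariant μ) (U : unitaryGroup n ℂ)
    {f : (n → ℂ) → ℝ} (hf : AEStronglyMeasurable f μ) :
    ∫ u, f ((U : Matrix n n ℂ) *ᵥ u) ∂μ = ∫ u, f u ∂μ := by
  have hU : Continuous fun u : n → ℂ => (U : Matrix n n ℂ) *ᵥ u :=
    continuous_const.matrix_mulVec continuous_id
  conv_rhs => rw [← hinv U]
  rw [integral_map hU.aemeasurable (by rwa [hinv U])]

theorem integral_normSq_add_mul_sq (hinv : IsUnitarilyInvariant μ) {i j : n} (hij : i ≠ j)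
    {w : ℂ} (hw : normSq w = 1) :
    ∫ u, normSq (u i + w * u j) ^ 2 ∂μ = 4 * fourthMoment μ i i := by
  set c : ℂ := (((√2)⁻¹ : ℝ) : ℂ)
  have hc : normSq c = 1 / 2 := by
    rw [normSq_ofReal, ← mul_inv, Real.mul_self_sqrt zero_le_two, one_div]
  have hG := givens_mem_unitaryGroup hij (c := c) (s := w * c) (by
    rw [normSq_mul, hw, hc]; norm_num)
  have h := hinv.integral_comp_mulVec ⟨_, hG⟩ (f := fun u => normSq (u i) ^ 2)
    (Continuous.aestronglyMeasurable (by fun_prop))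
  have hGu : ∀ u : n → ℂ, normSq ((givens i j c (w * c) *ᵥ u) i) ^ 2 =
      1 / 4 * normSq (u i + w * u j) ^ 2 := fun u => by
    rw [givens_mulVec_apply_left hij, show c * u i + w * c * u j = c * (u i + w * u j) by ring,
      normSq_mul, hc]
    ring
  simp only [hGu, integral_const_mul] at h
  simp only [fourthMoment, ← sq]
  linarith

theorem three_mul_fourthMoment_self [IsFiniteMeasure μ]
    (hμ : ∀ᵐ u ∂μ, ∑ α, normSq (u α) = 1) (hinv : IsUnitarilyInvariant μ) {i j : n}
    (hij : i ≠ j) : 3 * fourthMoment μ i i = fourthMoment μ j j + 4 * fourthMoment μ i j := by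
  have hint : ∀ {f : (n → ℂ) → ℝ}, Continuous f → Integrable f μ :=
    Continuous.integrable_of_ae_sum_normSq_eq_one hμ
  have hsum := integral_finsetSum (μ := μ) (Finset.range 4)
    (f := fun k u => normSq (u i + I ^ k * u j) ^ 2) fun k _ => hint (by fun_prop)
  simp only [hinv.integral_normSq_add_mul_sq hij (w := I ^ _) (by simp),
    sum_range_four_normSq_add_I_pow_mul_sq] at hsum
  rw [integral_add (hint (by fun_prop)) (hint (by fun_prop)),
    integral_add (hint (by fun_prop)) (hint (by fun_prop))] at hsum
  simp only [mul_assoc, integral_const_mul, Finset.sum_const, Finset.card_range,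
    nsmul_eq_mul, Nat.cast_ofNat] at hsum
  simp only [fourthMoment, ← sq] at hsum ⊢
  linarith

theorem fourthMoment_self_eq [IsFiniteMeasure μ] (hμ : ∀ᵐ u ∂μ, ∑ α, normSq (u α) = 1)
    (hinv : IsUnitarilyInvariant μ) (i j : n) : fourthMoment μ i i = fourthMoment μ j j := by
  rcases eq_or_ne i j with rfl | hij
  · rfl
  have hi := hinv.three_mul_fourthMoment_self hμ hij
  have hj := hinv.three_mul_fourthMoment_self hμ hij.symm
  rw [fourthMoment_comm μ j i] at hj
  linarith

theorem fourthMoment_of_ne [IsFiniteMeasure μ] (hμ : ∀ᵐ u ∂μ, ∑ α, normSq (u α) = 1)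
    (hinv : IsUnitarilyInvariant μ) {i j : n} (hij : i ≠ j) :
    fourthMoment μ i j = fourthMoment μ i i / 2 := by
  have h := hinv.three_mul_fourthMoment_self hμ hij
  rw [hinv.fourthMoment_self_eq hμ j i] at h
  linarith

theorem fourthMoment_eq [IsProbabilityMeasure μ] (hμ : ∀ᵐ u ∂μ, ∑ α, normSq (u α) = 1)
    (hinv : IsUnitarilyInvariant μ) (i j : n) :
    fourthMoment μ i j =
      (if i = j then 2 else 1) / (Fintype.card n * (Fintype.card n + 1)) := by
  set c := fourthMoment μ i i / 2
  have hm : ∀ a b, fourthMoment μ a b = (if a = b then 2 else 1) * c := by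
    intro a b
    split_ifs with hab
    · rw [hab, hinv.fourthMoment_self_eq hμ b i]; ring
    · rw [hinv.fourthMoment_of_ne hμ hab, hinv.fourthMoment_self_eq hμ a i]; ring
  have hcount : ∑ a : n, ∑ b : n, (if a = b then (2 : ℝ) else 1) =
      Fintype.card n * (Fintype.card n + 1) := by
    simpa [sq, mul_add] using Finset.sum_mul_mul_ite_two_one (fun _ : n => (1 : ℝ))
  have hsum := sum_fourthMoment hμ
  simp only [hm, ← Finset.sum_mul, hcount] at hsum
  have hN : (0 : ℝ) < Fintype.card n := Nat.cast_pos.mpr (Fintype.card_pos_iff.mpr ⟨i⟩)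
  rw [hm, eq_div_iff (by positivity)]
  linear_combination (if i = j then (2 : ℝ) else 1) * hsum

theorem integral_norm_sum_mul_mul_conj_sq [IsFiniteMeasure μ]
    (hμ : ∀ᵐ u ∂μ, ∑ α, normSq (u α) = 1) (hinv : IsUnitarilyInvariant μ)
    {A : Matrix n n ℂ} (hA : A.IsHermitian) :
    ∫ u, ‖∑ α, ∑ β, A α β * u α * conj (u β)‖ ^ 2 ∂μ =
      ∑ γ, ∑ δ, hA.eigenvalues γ * hA.eigenvalues δ * fourthMoment μ γ δ := by
  have hint : ∀ {f : (n → ℂ) → ℝ}, Continuous f → Integrable f μ :=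
    Continuous.integrable_of_ae_sum_normSq_eq_one hμ
  have hVt := transpose_mem_unitaryGroup_iff.mpr hA.eigenvectorUnitary.2
  simp_rw [hA.sum_mul_mul_conj_eq, norm_real, Real.norm_eq_abs, sq_abs]
  rw [hinv.integral_comp_mulVec ⟨_, hVt⟩ (f := fun u => (∑ γ, hA.eigenvalues γ * normSq (u γ)) ^ 2)
    (Continuous.aestronglyMeasurable (by fun_prop))]
  simp_rw [sq, Finset.sum_mul_sum, fourthMoment]
  rw [integral_finsetSum _ fun γ _ => integrable_finsetSum _ fun δ _ => hint (by fun_prop)]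
  refine Finset.sum_congr rfl fun γ _ => ?_
  rw [integral_finsetSum _ fun δ _ => hint (by fun_prop)]
  refine Finset.sum_congr rfl fun δ _ => ?_
  rw [← integral_const_mul]
  congr 1 with u
  ring

theorem integral_norm_sum_mul_mul_conj_sq_of_trace_eq_zero [IsProbabilityMeasure μ]
    (hμ : ∀ᵐ u ∂μ, ∑ α, normSq (u α) = 1) (hinv : IsUnitarilyInvariant μ)
    {A : Matrix n n ℂ} (hA : A.IsHermitian) (htr : A.trace = 0) :
    ∫ u, ‖∑ α, ∑ β, A α β * u α * conj (u β)‖ ^ 2 ∂μ =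
      (∑ γ, hA.eigenvalues γ ^ 2) / (Fintype.card n * (Fintype.card n + 1)) := by
  have hsum : ∑ γ, hA.eigenvalues γ = 0 := by
    simpa using congrArg Complex.re (hA.trace_eq_sum_eigenvalues.symm.trans htr)
  simp_rw [hinv.integral_norm_sum_mul_mul_conj_sq hμ hA, hinv.fourthMoment_eq hμ, ← mul_div_assoc,
    ← Finset.sum_div, Finset.sum_mul_mul_ite_two_one, hsum]
  ring

end IsUnitarilyInvariant

end Fintype

theorem stmt5_general (r : ℕ) (μ : Measure (Fin r → ℂ)) [IsProbabilityMeasure μ]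
    -- μ is carried by the unit sphere S^{2r-1} ⊂ ℂ^r
    (hsupp : μ {u : Fin r → ℂ | ∑ α, Complex.normSq (u α) = 1}ᶜ = 0)
    -- μ is invariant under the unitary group U(r) (rotation invariance)
    (hinv : ∀ U : Matrix.unitaryGroup (Fin r) ℂ,
      μ.map (fun u => (U : Matrix (Fin r) (Fin r) ℂ).mulVec u) = μ)
    (A : Matrix (Fin r) (Fin r) ℂ) (hA : A.IsHermitian) (htr : A.trace = 0) :
    ∫ u, ‖∑ α, ∑ β, A α β * u α * (starRingEnd ℂ) (u β)‖ ^ 2 ∂μ =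
        (∑ α, hA.eigenvalues α ^ 2) / (r * (r + 1)) ∧
      ∫ u, ‖∑ α, ∑ β, A α β * u α * (starRingEnd ℂ) (u β)‖ ^ 2 ∂μ ≤
        (⨆ α, |hA.eigenvalues α|) ^ 2 / (r + 1) := by
  have h := IsUnitarilyInvariant.integral_norm_sum_mul_mul_conj_sq_of_trace_eq_zero
    (mem_ae_iff.mpr hsupp) hinv hA htr
  have hle := sum_sq_div_le_iSup_abs_sq_div hA.eigenvalues
  rw [Fintype.card_fin] at h hle
  exact ⟨h, h ▸ hle⟩

theorem stmt5 (r : ℕ) (hr : 0 < r) (μ : Measure (Fin r → ℂ)) [IsProbabilityMeasure μ]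
    -- μ is carried by the unit sphere S^{2r-1} ⊂ ℂ^r
    (hsupp : μ {u : Fin r → ℂ | ∑ α, Complex.normSq (u α) = 1}ᶜ = 0)
    -- μ is invariant under the unitary group U(r) (rotation invariance)
    (hinv : ∀ U : Matrix.unitaryGroup (Fin r) ℂ,
      μ.map (fun u => (U : Matrix (Fin r) (Fin r) ℂ).mulVec u) = μ)
    (A : Matrix (Fin r) (Fin r) ℂ) (hA : A.IsHermitian) (htr : A.trace = 0) :
    ∫ u, ‖∑ α, ∑ β, A α β * u α * (starRingEnd ℂ) (u β)‖ ^ 2 ∂μ =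
        (∑ α, hA.eigenvalues α ^ 2) / (r * (r + 1)) ∧
      ∫ u, ‖∑ α, ∑ β, A α β * u α * (starRingEnd ℂ) (u β)‖ ^ 2 ∂μ ≤
        (⨆ α, |hA.eigenvalues α|) ^ 2 / (r + 1) :=
  stmt5_general r μ hsupp hinv A hA htr
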